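/- Let a > 0 and b be real numbers, and let n be an odd natural number. Then ∫_{-∞}^{∞} |λ| λⁿ e^{-aλ² + 2bλ} dλ = 2b · a^{-(n+3)/2} · Γ((n+3)/2) · ₁F₁((n+3)/2, 3/2, b²/a). -/

import Mathlib

/-- The confluent hypergeometric function of the first kind,
`₁F₁(a, b, z) = ∑_{k≥0} (a)_k z^k / ((b)_k k!)`. -/
noncomputable def hyp1F1 (a b z : ℝ) : ℝ :=
  ∑' k : ℕ, ((ascPochhammer ℝ k).eval a * z ^ k) /
    ((ascPochhammer ℝ k).eval b * (Nat.factorial k))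

/-!
Since `n` is odd, the integrand at `x` and at `-x` add up to
`2 x ^ (n + 1) e ^ (-a x²) sinh (2 b x)` for `x > 0`. Expanding `sinh` and integrating termwise
over `(0, ∞)` (the series with `|b|` in place of `b` dominates), the `m`-th term is a Gaussian
moment `Γ(c + m) / (2 a ^ (c + m))` with `c = (n + 3) / 2`. The identities
`Γ(c + m) = Γ(c) (c)ₘ` and `(2m + 1)! = 4 ^ m m! (3/2)ₘ` turn the resulting series into
`₁F₁(c; 3/2; b² / a)`.
-/

open MeasureTheory Set Real Nat
lemma integral_eq_integral_Ioi_add_comp_neg {E : Type*} [NormedAddCommGroup E] [NormedSpace ℝ E]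
    {f : ℝ → E} (hf : Integrable f) : ∫ x, f x = ∫ x in Ioi 0, (f x + f (-x)) := by
  rw [integral_add hf.integrableOn hf.comp_neg.integrableOn, integral_comp_neg_Ioi, neg_zero,
    add_comm, intervalIntegral.integral_Iic_add_Ioi hf.integrableOn hf.integrableOn]

lemma integral_Ioi_pow_mul_exp_neg_mul_sq {a : ℝ} (ha : 0 < a) (k : ℕ) :
    ∫ x in Ioi 0, x ^ k * exp (-a * x ^ 2) =
      a ^ (-((k : ℝ) + 1) / 2) * (1 / 2) * Gamma (((k : ℝ) + 1) / 2) := by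
  rw [← integral_rpow_mul_exp_neg_mul_rpow two_pos (by linarith [k.cast_nonneg (α := ℝ)]) ha]
  norm_cast

lemma integrable_pow_mul_exp_neg_mul_sq_add_mul {a : ℝ} (ha : 0 < a) (b : ℝ) (k : ℕ) :
    Integrable fun x : ℝ => x ^ k * exp (-a * x ^ 2 + b * x) := by
  have hmoment : Integrable fun x : ℝ => x ^ k * exp (-(a / 2) * x ^ 2) := by
    simpa only [rpow_natCast] using
      integrable_rpow_mul_exp_neg_mul_sq (s := k) (half_pos ha)
        (by linarith [k.cast_nonneg (α := ℝ)])
  refine (hmoment.const_mul (exp (b ^ 2 / (2 * a)))).mono (by fun_prop) (ae_of_all _ fun x => ?_)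
  have hexp : -a * x ^ 2 + b * x ≤ b ^ 2 / (2 * a) + -(a / 2) * x ^ 2 := by
    have hsq : b ^ 2 / (2 * a) + -(a / 2) * x ^ 2 - (-a * x ^ 2 + b * x) =
        (a * x - b) ^ 2 / (2 * a) := by
      field_simp
      ring
    linarith [show 0 ≤ (a * x - b) ^ 2 / (2 * a) by positivity]
  rw [norm_mul, norm_mul, norm_mul, mul_left_comm, norm_of_nonneg (exp_pos _).le,
    norm_of_nonneg (exp_pos _).le, norm_of_nonneg (exp_pos _).le, ← exp_add]
  gcongr

lemma integrable_pow_mul_exp_neg_mul_sq_mul_sinh {a : ℝ} (ha : 0 < a) (b : ℝ) (k : ℕ) :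
    Integrable fun x : ℝ => x ^ k * exp (-a * x ^ 2) * sinh (b * x) := by
  refine (((integrable_pow_mul_exp_neg_mul_sq_add_mul ha b k).sub
    (integrable_pow_mul_exp_neg_mul_sq_add_mul ha (-b) k)).div_const 2).congr
    (ae_of_all _ fun x => ?_)
  simp only [Pi.sub_apply, sinh_eq, neg_mul, exp_add, exp_neg]
  ring

lemma integrable_abs_mul_pow_mul_exp {a : ℝ} (ha : 0 < a) (b : ℝ) (n : ℕ) :
    Integrable fun x : ℝ => |x| * x ^ n * exp (-a * x ^ 2 + 2 * b * x) := by
  refine (integrable_pow_mul_exp_neg_mul_sq_add_mul ha (2 * b) (n + 1)).mono (by fun_prop)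
    (ae_of_all _ fun x => le_of_eq ?_)
  simp only [norm_mul, norm_pow, Real.norm_eq_abs, abs_abs]
  ring

lemma hasSum_pow_mul_exp_neg_mul_sq_mul_sinh (a b x : ℝ) (k : ℕ) :
    HasSum
      (fun m : ℕ => b ^ (2 * m + 1) / (2 * m + 1)! * (x ^ (k + 2 * m + 1) * exp (-a * x ^ 2)))
      (x ^ k * exp (-a * x ^ 2) * sinh (b * x)) := by
  refine ((hasSum_sinh (b * x)).mul_left (x ^ k * exp (-a * x ^ 2))).congr_fun fun m => ?_
  rw [mul_pow, add_assoc, pow_add]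
  ring

lemma hasSum_integral_Ioi_pow_mul_exp_neg_mul_sq_mul_sinh {a : ℝ} (ha : 0 < a) (b : ℝ)
    (k : ℕ) :
    HasSum (fun m : ℕ => ∫ x in Ioi 0,
        b ^ (2 * m + 1) / (2 * m + 1)! * (x ^ (k + 2 * m + 1) * exp (-a * x ^ 2)))
      (∫ x in Ioi 0, x ^ k * exp (-a * x ^ 2) * sinh (b * x)) := by
  refine hasSum_integral_of_dominated_convergence
    (fun m x => |b| ^ (2 * m + 1) / (2 * m + 1)! * (x ^ (k + 2 * m + 1) * exp (-a * x ^ 2)))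
    (fun m => by fun_prop) (fun m => ?_)
    (ae_of_all _ fun x => (hasSum_pow_mul_exp_neg_mul_sq_mul_sinh a |b| x k).summable) ?_
    (ae_of_all _ fun x => hasSum_pow_mul_exp_neg_mul_sq_mul_sinh a b x k)
  · filter_upwards [ae_restrict_mem measurableSet_Ioi] with x hx
    rw [norm_mul, norm_div, norm_pow, norm_mul, norm_pow, norm_of_nonneg (exp_pos _).le,
      norm_of_nonneg (le_of_lt hx), Real.norm_eq_abs, RCLike.norm_natCast]
  · simp_rw [fun x => (hasSum_pow_mul_exp_neg_mul_sq_mul_sinh a |b| x k).tsum_eq]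
    exact (integrable_pow_mul_exp_neg_mul_sq_mul_sinh ha |b| k).integrableOn

lemma integral_Ioi_pow_div_factorial_mul_pow_mul_exp_neg_mul_sq {a : ℝ} (ha : 0 < a) (b : ℝ)
    (k m : ℕ) :
    ∫ x in Ioi 0, b ^ (2 * m + 1) / (2 * m + 1)! * (x ^ (k + 2 * m + 1) * exp (-a * x ^ 2)) =
      b ^ (2 * m + 1) / (2 * m + 1)! *
        (a ^ (-((k : ℝ) / 2 + 1 + m)) * (1 / 2) * Gamma ((k : ℝ) / 2 + 1 + m)) := by
  rw [integral_const_mul, integral_Ioi_pow_mul_exp_neg_mul_sq ha]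
  push_cast
  ring_nf

lemma ascPochhammer_eval_three_halves_mul_four_pow_mul_factorial (m : ℕ) :
    (ascPochhammer ℝ m).eval (3 / 2) * 4 ^ m * m ! = (2 * m + 1)! := by
  induction m with
  | zero => simp
  | succ m ih =>
    rw [ascPochhammer_succ_eval, show 2 * (m + 1) + 1 = 2 * m + 1 + 1 + 1 by ring,
      factorial_succ (2 * m + 1 + 1), factorial_succ (2 * m + 1), factorial_succ m]
    push_cast [← ih]
    ring

lemma Gamma_add_natCast_eq_Gamma_mul_ascPochhammer_eval {c : ℝ} (hc : ∀ k : ℕ, c ≠ -k)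
    (m : ℕ) :
    Gamma (c + m) = Gamma c * (ascPochhammer ℝ m).eval c := by
  induction m with
  | zero => simp
  | succ m ih =>
    have hcm : c + m ≠ 0 := fun h => hc m (by linarith)
    rw [Nat.cast_succ, ← add_assoc, Gamma_add_one hcm, ih, ascPochhammer_succ_eval]
    ring

lemma pow_div_factorial_mul_Gamma_eq_hyp1F1_term {a c : ℝ} (ha : 0 < a)
    (hc : ∀ k : ℕ, c ≠ -k) (b : ℝ) (m : ℕ) :
    (2 * b) ^ (2 * m + 1) / (2 * m + 1)! * (a ^ (-(c + m)) * (1 / 2) * Gamma (c + m)) =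
      b * a ^ (-c) * Gamma c *
        ((ascPochhammer ℝ m).eval c * (b ^ 2 / a) ^ m /
          ((ascPochhammer ℝ m).eval (3 / 2) * m !)) := by
  have hpoch := (ascPochhammer_pos m (3 / 2 : ℝ) (by norm_num)).ne'
  rw [Gamma_add_natCast_eq_Gamma_mul_ascPochhammer_eval hc,
    neg_add, ← sub_eq_add_neg, rpow_sub_natCast ha.ne',
    ← ascPochhammer_eval_three_halves_mul_four_pow_mul_factorial, pow_succ, pow_mul, mul_pow,
    div_pow, show (2 : ℝ) ^ 2 = 4 by norm_num]
  field_simp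
  ring

lemma abs_mul_pow_mul_exp_add_comp_neg {n : ℕ} (hn : Odd n) (a b : ℝ) {x : ℝ} (hx : 0 ≤ x) :
    |x| * x ^ n * exp (-a * x ^ 2 + 2 * b * x) +
        |-x| * (-x) ^ n * exp (-a * (-x) ^ 2 + 2 * b * -x) =
      2 * (x ^ (n + 1) * exp (-a * x ^ 2) * sinh (2 * b * x)) := by
  rw [abs_neg, abs_of_nonneg hx, hn.neg_pow, sinh_eq, neg_sq, exp_add, exp_add, pow_succ,
    mul_neg, ← neg_mul]
  ring_nf

theorem stmt2 (a b : ℝ) (ha : 0 < a) (n : ℕ) (hn : Odd n) :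
    ∫ x : ℝ, |x| * x ^ n * Real.exp (-a * x ^ 2 + 2 * b * x)
      = 2 * b * Real.rpow a (-(((n : ℝ) + 3) / 2)) * Real.Gamma (((n : ℝ) + 3) / 2) *
        hyp1F1 (((n : ℝ) + 3) / 2) (3 / 2) (b ^ 2 / a) := by
  set c : ℝ := ((n : ℝ) + 3) / 2
  have hc (k : ℕ) : c ≠ -k := ((neg_nonpos.2 k.cast_nonneg).trans_lt (by positivity)).ne'
  have hterm (m : ℕ) :
      ∫ x in Ioi 0, (2 * b) ^ (2 * m + 1) / (2 * m + 1)! *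
        (x ^ (n + 1 + 2 * m + 1) * exp (-a * x ^ 2)) =
      b * a ^ (-c) * Gamma c *
        ((ascPochhammer ℝ m).eval c * (b ^ 2 / a) ^ m /
          ((ascPochhammer ℝ m).eval (3 / 2) * m !)) := by
    rw [integral_Ioi_pow_div_factorial_mul_pow_mul_exp_neg_mul_sq ha,
      show ((n + 1 : ℕ) : ℝ) / 2 + 1 = c by push_cast; ring,
      pow_div_factorial_mul_Gamma_eq_hyp1F1_term ha hc]
  rw [integral_eq_integral_Ioi_add_comp_neg (integrable_abs_mul_pow_mul_exp ha b n),
    setIntegral_congr_fun measurableSet_Ioi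
      fun x hx => abs_mul_pow_mul_exp_add_comp_neg hn a b (le_of_lt hx),
    integral_const_mul,
    ← (hasSum_integral_Ioi_pow_mul_exp_neg_mul_sq_mul_sinh ha (2 * b) (n + 1)).tsum_eq,
    tsum_congr hterm, tsum_mul_left, hyp1F1, rpow_eq_pow]
  ring
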